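/- For any orthonormal-column matrix $\mathbf{V}\in\mathbb{R}^{N_h\times N}$, the continuous POD truncated eigenvalue sum is bounded by the projection error obtained with $\mathbf{V}$: $\sum_{k>N}\sigma_{k,\infty}^2\le\int_{\mathcal{D}}\|\mathbf{u}(\mu,t)-\mathbf{V}\mathbf{V}^T\mathbf{u}(\mu,t)\|^2\,d(\mu,t)$, where $\sigma_{k,\infty}^2$ are the eigenvalues of $\mathbf{K}_\infty=\int_{\mathcal{D}}\mathbf{u}\mathbf{u}^T$. -/

import Mathlib

open MeasureTheory Matrix

/-- Euclidean norm of a vector represented as a function. -/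
noncomputable def vnorm {n : ℕ} (v : Fin n → ℝ) : ℝ :=
  Real.sqrt (∑ i, (v i) ^ 2)

lemma vnorm_sq {n : ℕ} (v : Fin n → ℝ) : vnorm v ^ 2 = ∑ i, v i ^ 2 :=
  Real.sq_sqrt (by positivity)

lemma dot_self_eq {n : ℕ} (v : Fin n → ℝ) : v ⬝ᵥ v = ∑ i, v i ^ 2 := by
  simp [dotProduct, sq]

lemma dot_mulVec_self {n m : ℕ} (A : Matrix (Fin n) (Fin m) ℝ) (v : Fin m → ℝ) :
    A.mulVec v ⬝ᵥ A.mulVec v = v ⬝ᵥ (Aᵀ * A).mulVec v := by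
  rw [← mulVec_mulVec, dotProduct_mulVec, ← mulVec_transpose, dotProduct_comm]

lemma pw {Nh N : ℕ} (V : Matrix (Fin Nh) (Fin N) ℝ) (hV : Vᵀ * V = 1) (v : Fin Nh → ℝ) :
    vnorm (v - V.mulVec (Vᵀ.mulVec v)) ^ 2 = (∑ i, v i ^ 2) - v ⬝ᵥ (V * Vᵀ).mulVec v := by
  have hPP : (V * Vᵀ)ᵀ * (V * Vᵀ) = V * Vᵀ := by
    rw [transpose_mul, transpose_transpose, Matrix.mul_assoc, ← Matrix.mul_assoc Vᵀ V, hV,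
      Matrix.one_mul]
  have hmv : V.mulVec (Vᵀ.mulVec v) = (V * Vᵀ).mulVec v := by rw [mulVec_mulVec]
  have key : (V * Vᵀ).mulVec v ⬝ᵥ (V * Vᵀ).mulVec v = v ⬝ᵥ (V * Vᵀ).mulVec v := by
    rw [dot_mulVec_self, hPP]
  rw [vnorm_sq, hmv, ← dot_self_eq, ← dot_self_eq, sub_dotProduct, dotProduct_sub,
    dotProduct_sub, key, dotProduct_comm ((V * Vᵀ).mulVec v) v]
  ring

lemma rearrange {Nh N : ℕ} (hN : N < Nh) (σ : Fin Nh → ℝ) (hord : Antitone σ)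
    (c : Fin Nh → ℝ) (hc0 : ∀ k, 0 ≤ c k) (hc1 : ∀ k, c k ≤ 1)
    (hsum : ∑ k, c k = N) :
    ∑ k, σ k * c k ≤ ∑ k ∈ Finset.univ.filter (fun k : Fin Nh => (k : ℕ) < N), σ k := by
  set t : ℝ := σ ⟨N, hN⟩ with ht
  have hd : ∑ k ∈ Finset.univ.filter (fun k : Fin Nh => (k : ℕ) < N), σ k
      = ∑ k, σ k * (if (k : ℕ) < N then (1:ℝ) else 0) := by
    rw [Finset.sum_filter]
    exact Finset.sum_congr rfl fun k _ => by split <;> ring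
  rw [hd]
  have hcard : (Finset.univ.filter fun k : Fin Nh => (k:ℕ) < N).card = N := by
    have : (Finset.univ.filter fun k : Fin Nh => (k:ℕ) < N) = Finset.Iio (⟨N, hN⟩ : Fin Nh) := by
      ext k; simp [Fin.lt_def]
    rw [this, Fin.card_Iio]
  have hdsum : ∑ k : Fin Nh, (if (k : ℕ) < N then (1:ℝ) else 0) = N := by
    rw [Finset.sum_boole]
    simp [hcard]
  have key : ∑ k, (σ k * c k - σ k * (if (k : ℕ) < N then (1:ℝ) else 0))
      ≤ ∑ k, t * (c k - (if (k : ℕ) < N then (1:ℝ) else 0)) := by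
    apply Finset.sum_le_sum
    intro k _
    by_cases hk : (k : ℕ) < N
    · have h1 : t ≤ σ k := hord (by simp [Fin.le_def]; omega)
      have h2 : c k - 1 ≤ 0 := by linarith [hc1 k]
      simp only [hk, if_pos]
      nlinarith
    · have h1 : σ k ≤ t := hord (by simp [Fin.le_def]; omega)
      simp only [hk, if_neg, not_false_iff]
      nlinarith [hc0 k]
  rw [Finset.sum_sub_distrib] at key
  rw [← Finset.mul_sum] at key
  rw [Finset.sum_sub_distrib, hsum, hdsum, sub_self, mul_zero] at key
  linarith


/-- for any orthonormal-column matrix `V ∈ ℝ^{N_h × N}`, the truncated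
eigenvalue sum of the continuous correlation matrix `K∞ = ∫ u uᵀ` (eigenvalues ordered
decreasingly) is bounded by the projection error obtained with `V`:
`∑_{k>N} σ²_{k,∞} ≤ ∫ ‖u - VVᵀu‖²`. -/
theorem stmt_8 {D : Type*} [MeasurableSpace D] (μ : Measure D) [IsFiniteMeasure μ]
    {Nh N : ℕ} (u : D → Fin Nh → ℝ) (hu : Measurable u)
    (hL2 : ∀ W : Matrix (Fin Nh) (Fin N) ℝ,
      Integrable (fun x => vnorm (u x - W.mulVec (Wᵀ.mulVec (u x))) ^ 2) μ)
    (Kinf : Matrix (Fin Nh) (Fin Nh) ℝ)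
    (hKinf : ∀ i l, Kinf i l = ∫ x, u x i * u x l ∂μ)
    (σsq : Fin Nh → ℝ) (hord : Antitone σsq)
    (ev : Fin Nh → Fin Nh → ℝ)
    (heig : ∀ k, Kinf.mulVec (ev k) = σsq k • ev k)
    (horth : ∀ k l, (∑ i, ev k i * ev l i) = if k = l then (1 : ℝ) else 0)
    (V : Matrix (Fin Nh) (Fin N) ℝ) (hV : Vᵀ * V = 1) :
    (∑ k ∈ Finset.univ.filter (fun k : Fin Nh => N ≤ (k : ℕ)), σsq k) ≤
      ∫ x, vnorm (u x - V.mulVec (Vᵀ.mulVec (u x))) ^ 2 ∂μ := by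
  by_cases hN : N < Nh
  swap
  · have hempty : Finset.univ.filter (fun k : Fin Nh => N ≤ (k : ℕ)) = ∅ := by
      ext k
      simp only [Finset.mem_filter, Finset.mem_univ, true_and, Finset.notMem_empty, iff_false]
      have := k.isLt; omega
    rw [hempty, Finset.sum_empty]
    apply integral_nonneg
    intro x; positivity
  set P : Matrix (Fin Nh) (Fin Nh) ℝ := V * Vᵀ with hPdef
  -- orthonormality in the other direction
  have horth2 : ∀ i l, (∑ k, ev k i * ev k l) = if i = l then (1 : ℝ) else 0 := by
    have hE : (Matrix.of ev) * (Matrix.of ev)ᵀ = 1 := by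
      ext k l
      simp only [Matrix.mul_apply, Matrix.transpose_apply, Matrix.of_apply, Matrix.one_apply]
      exact horth k l
    have hE2 : (Matrix.of ev)ᵀ * (Matrix.of ev) = 1 := mul_eq_one_comm.mp hE
    intro i l
    have := congrFun (congrFun hE2 i) l
    simpa [Matrix.mul_apply, Matrix.one_apply] using this
  -- spectral decomposition of Kinf
  have hspec : ∀ i l, Kinf i l = ∑ k, σsq k * (ev k i * ev k l) := by
    intro i l
    have h1 : ∀ k, (∑ j, Kinf i j * ev k j) = σsq k * ev k i := by
      intro k
      have := congrFun (heig k) i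
      simpa [Matrix.mulVec, dotProduct] using this
    calc Kinf i l = ∑ j, Kinf i j * (if j = l then (1:ℝ) else 0) := by simp
      _ = ∑ j, Kinf i j * (∑ k, ev k j * ev k l) := by
          exact Finset.sum_congr rfl fun j _ => by rw [horth2 j l]
      _ = ∑ j, ∑ k, Kinf i j * ev k j * ev k l := by
          refine Finset.sum_congr rfl fun j _ => ?_
          rw [Finset.mul_sum]
          exact Finset.sum_congr rfl fun k _ => by ring
      _ = ∑ k, ∑ j, Kinf i j * ev k j * ev k l := Finset.sum_comm
      _ = ∑ k, (∑ j, Kinf i j * ev k j) * ev k l := by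
          exact Finset.sum_congr rfl fun k _ => by rw [Finset.sum_mul]
      _ = ∑ k, σsq k * (ev k i * ev k l) := by
          exact Finset.sum_congr rfl fun k _ => by rw [h1 k]; ring
  -- trace identity
  have htr : ∑ i, Kinf i i = ∑ k, σsq k := by
    calc ∑ i, Kinf i i = ∑ i, ∑ k, σsq k * (ev k i * ev k i) :=
          Finset.sum_congr rfl fun i _ => hspec i i
      _ = ∑ k, ∑ i, σsq k * (ev k i * ev k i) := Finset.sum_comm
      _ = ∑ k, σsq k * (∑ i, ev k i * ev k i) := by
          exact Finset.sum_congr rfl fun k _ => by rw [Finset.mul_sum]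
      _ = ∑ k, σsq k := by
          refine Finset.sum_congr rfl fun k _ => ?_
          rw [horth k k]; simp
  -- the coefficients c
  set c : Fin Nh → ℝ := fun k => ev k ⬝ᵥ P.mulVec (ev k) with hcdef
  have hcP : ∀ k, c k = (Vᵀ.mulVec (ev k)) ⬝ᵥ (Vᵀ.mulVec (ev k)) := by
    intro k
    rw [hcdef]
    rw [dot_mulVec_self, transpose_transpose]
  have hc0 : ∀ k, 0 ≤ c k := by
    intro k
    rw [hcP k, dot_self_eq]
    positivity
  have hc1 : ∀ k, c k ≤ 1 := by
    intro k
    have h1 := pw V hV (ev k)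
    have h2 : ∑ i, ev k i ^ 2 = 1 := by
      have := horth k k
      simpa [sq] using this
    have h3 : 0 ≤ vnorm (ev k - V.mulVec (Vᵀ.mulVec (ev k))) ^ 2 := sq_nonneg _
    rw [h1, h2] at h3
    have : ev k ⬝ᵥ (V * Vᵀ).mulVec (ev k) = c k := rfl
    linarith [h3.trans_eq (by rw [this])]
  have hcsum : ∑ k, c k = N := by
    have step1 : ∑ k, c k = ∑ i, ∑ j, P i j * (∑ k, ev k i * ev k j) := by
      simp only [hcdef, dotProduct, Matrix.mulVec, Finset.mul_sum]
      rw [Finset.sum_comm]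
      refine Finset.sum_congr rfl fun i _ => ?_
      rw [Finset.sum_comm]
      exact Finset.sum_congr rfl fun j _ => Finset.sum_congr rfl fun k _ => by ring
    rw [step1]
    have step2 : ∀ i : Fin Nh, ∑ j, P i j * (∑ k, ev k i * ev k j) = P i i := by
      intro i
      calc ∑ j, P i j * (∑ k, ev k i * ev k j)
          = ∑ j, P i j * (if i = j then (1:ℝ) else 0) := by
            exact Finset.sum_congr rfl fun j _ => by rw [horth2 i j]
        _ = P i i := by simp
    rw [Finset.sum_congr rfl fun i _ => step2 i]
    have : ∑ i, P i i = Matrix.trace (V * Vᵀ) := by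
      simp [Matrix.trace, Matrix.diag, hPdef]
    rw [this, Matrix.trace_mul_comm, hV, Matrix.trace_one]
    simp
  -- integrability facts
  have hg : Integrable (fun x => ∑ i, u x i ^ 2) μ := by
    have h0 := hL2 0
    simpa [vnorm_sq] using h0
  have hmeas : ∀ i : Fin Nh, Measurable fun x => u x i :=
    fun i => (measurable_pi_apply i).comp hu
  have hint2 : ∀ i j, Integrable (fun x => u x i * u x j) μ := by
    intro i j
    apply Integrable.mono' hg (((hmeas i).mul (hmeas j)).aestronglyMeasurable)
    filter_upwards with x
    have h1 : u x i ^ 2 ≤ ∑ l, u x l ^ 2 :=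
      Finset.single_le_sum (fun l _ => sq_nonneg (u x l)) (Finset.mem_univ i)
    have h2 : u x j ^ 2 ≤ ∑ l, u x l ^ 2 :=
      Finset.single_le_sum (fun l _ => sq_nonneg (u x l)) (Finset.mem_univ j)
    have h3 : |u x i * u x j| ≤ (u x i ^ 2 + u x j ^ 2) / 2 := by
      rw [abs_mul]
      nlinarith [sq_nonneg (|u x i| - |u x j|), sq_abs (u x i), sq_abs (u x j),
        abs_nonneg (u x i), abs_nonneg (u x j)]
    calc ‖u x i * u x j‖ = |u x i * u x j| := rfl
      _ ≤ (u x i ^ 2 + u x j ^ 2) / 2 := h3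
      _ ≤ ∑ l, u x l ^ 2 := by
          have h4 : 0 ≤ ∑ l, u x l ^ 2 := Finset.sum_nonneg fun l _ => sq_nonneg _
          linarith
  have hh : Integrable (fun x => ∑ i, ∑ j, P i j * (u x i * u x j)) μ := by
    apply integrable_finset_sum
    intro i _
    apply integrable_finset_sum
    intro j _
    exact (hint2 i j).const_mul _
  -- computing the RHS integral
  have hRHS : ∫ x, vnorm (u x - V.mulVec (Vᵀ.mulVec (u x))) ^ 2 ∂μ
      = (∑ i, Kinf i i) - ∑ i, ∑ j, P i j * Kinf i j := by
    have hfun : (fun x => vnorm (u x - V.mulVec (Vᵀ.mulVec (u x))) ^ 2)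
        = fun x => (∑ i, u x i ^ 2) - ∑ i, ∑ j, P i j * (u x i * u x j) := by
      funext x
      rw [pw V hV (u x)]
      congr 1
      simp only [dotProduct, Matrix.mulVec, Finset.mul_sum]
      exact Finset.sum_congr rfl fun i _ => Finset.sum_congr rfl fun j _ => by ring
    rw [hfun, integral_sub hg hh]
    congr 1
    · rw [integral_finset_sum _ (fun i _ => by
        simpa [sq] using hint2 i i)]
      refine Finset.sum_congr rfl fun i _ => ?_
      rw [hKinf i i]
      simp [sq]
    · rw [integral_finset_sum _ (fun i _ => integrable_finset_sum _
        (fun j _ => (hint2 i j).const_mul (P i j)))]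
      refine Finset.sum_congr rfl fun i _ => ?_
      rw [integral_finset_sum _ (fun j _ => (hint2 i j).const_mul (P i j))]
      refine Finset.sum_congr rfl fun j _ => ?_
      rw [integral_const_mul, hKinf i j]
  -- relating sums
  have hcc : ∑ i, ∑ j, P i j * Kinf i j = ∑ k, σsq k * c k := by
    calc ∑ i, ∑ j, P i j * Kinf i j
        = ∑ i, ∑ j, ∑ k, P i j * (σsq k * (ev k i * ev k j)) := by
          refine Finset.sum_congr rfl fun i _ => Finset.sum_congr rfl fun j _ => ?_
          rw [hspec i j, Finset.mul_sum]
      _ = ∑ i, ∑ k, ∑ j, P i j * (σsq k * (ev k i * ev k j)) := by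
          exact Finset.sum_congr rfl fun i _ => Finset.sum_comm
      _ = ∑ k, ∑ i, ∑ j, P i j * (σsq k * (ev k i * ev k j)) := Finset.sum_comm
      _ = ∑ k, σsq k * c k := by
          refine Finset.sum_congr rfl fun k _ => ?_
          simp only [hcdef, dotProduct, Matrix.mulVec, Finset.mul_sum]
          exact Finset.sum_congr rfl fun i _ => Finset.sum_congr rfl fun j _ => by ring
  -- final assembly
  have hre := rearrange hN σsq hord c hc0 hc1 hcsum
  have hsplit : (∑ k ∈ Finset.univ.filter (fun k : Fin Nh => (k : ℕ) < N), σsq k)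
      + (∑ k ∈ Finset.univ.filter (fun k : Fin Nh => N ≤ (k : ℕ)), σsq k) = ∑ k, σsq k := by
    have : Finset.univ.filter (fun k : Fin Nh => N ≤ (k : ℕ))
        = Finset.univ.filter (fun k : Fin Nh => ¬ ((k : ℕ) < N)) := by
      ext k; simp [not_lt]
    rw [this]
    exact Finset.sum_filter_add_sum_filter_not _ _ _
  rw [hRHS, htr, hcc]
  linarith
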